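/- Davidson gradient formula. Let κ > 0, and define F_D(z) = 10^{z} / (10^{−z} + κ + 10^{z}) and G_D(z) = (10^{z} + κ/2) / (10^{−z} + κ + 10^{z}). For y ∈ {0, 1, 2}, let L(z; 0) = F_D(−z), L(z; 1) = κ·√(F_D(z)·F_D(−z)), L(z; 2) = F_D(z), and ℓ(z; y) = log L(z; y). Then for every z ∈ ℝ and every y ∈ {0, 1, 2}, the derivative in z of ℓ(z; y) equals 2 (ln 10) · ( y/2 − G_D(z) ). -/

import Mathlib

/-- Davidson model function `F_D(z) = 10^z / (10^{−z} + κ + 10^z)`. -/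
noncomputable def FD (κ z : ℝ) : ℝ :=
  (10 : ℝ) ^ z / ((10 : ℝ) ^ (-z) + κ + (10 : ℝ) ^ z)

/-- Davidson expected-score function `G_D(z) = (10^z + κ/2) / (10^{−z} + κ + 10^z)`. -/
noncomputable def GD (κ z : ℝ) : ℝ :=
  ((10 : ℝ) ^ z + κ / 2) / ((10 : ℝ) ^ (-z) + κ + (10 : ℝ) ^ z)

/-- Davidson outcome probability: `L(z; 0) = F_D(−z)` (away win),
`L(z; 1) = κ √(F_D(z) F_D(−z))` (draw), `L(z; 2) = F_D(z)` (home win). -/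
noncomputable def LD (κ z y : ℝ) : ℝ :=
  if y = 0 then FD κ (-z)
  else if y = 1 then κ * Real.sqrt (FD κ z * FD κ (-z))
  else FD κ z

/-- Davidson gradient formula: for `κ > 0` and `y ∈ {0, 1, 2}`, the derivative in `z`
of the log-likelihood `ℓ(z; y) = log L(z; y)` equals `2 (ln 10)(y/2 − G_D(z))`. -/
theorem davidson_gradient (κ : ℝ) (hκ : 0 < κ) (y : ℝ)
    (hy : y = 0 ∨ y = 1 ∨ y = 2) (z : ℝ) :
    HasDerivAt (fun w => Real.log (LD κ w y))
      (2 * Real.log 10 * (y / 2 - GD κ z)) z := by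
  have h10 : (0:ℝ) < 10 := by norm_num
  have ha : ∀ x : ℝ, (0:ℝ) < (10:ℝ) ^ x := fun x => Real.rpow_pos_of_pos h10 x
  set c : ℝ := Real.log 10 with hc
  set D : ℝ → ℝ := fun w => (10:ℝ) ^ (-w) + κ + (10:ℝ) ^ w with hDdef
  have hDpos : ∀ w, 0 < D w := fun w => by
    have h1 := ha (-w); have h2 := ha w
    simp only [hDdef]; linarith
  have hexp : ∀ x : ℝ, HasDerivAt (fun w => (10:ℝ) ^ w) ((10:ℝ) ^ x * c) x :=
    fun x => (Real.hasStrictDerivAt_const_rpow h10 x).hasDerivAt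
  have hexpneg : HasDerivAt (fun w => (10:ℝ) ^ (-w)) (-((10:ℝ) ^ (-z) * c)) z := by
    have := (hexp (-z)).comp z (hasDerivAt_neg z)
    simpa [mul_comm, Function.comp_def] using this
  have hD : HasDerivAt D (-((10:ℝ) ^ (-z) * c) + (10:ℝ) ^ z * c) z := by
    have := (hexpneg.add_const κ).add (hexp z)
    simpa [hDdef, Pi.add_def] using this
  have hlogD : HasDerivAt (fun w => Real.log (D w))
      ((-((10:ℝ) ^ (-z) * c) + (10:ℝ) ^ z * c) / D z) z :=
    hD.log (hDpos z).ne'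
  -- log FD κ w
  have heqF : (fun w => Real.log (FD κ w)) = fun w => w * c - Real.log (D w) := by
    funext w
    rw [FD, Real.log_div (ha w).ne' (hDpos w).ne', Real.log_rpow h10]
  have hF : HasDerivAt (fun w => Real.log (FD κ w))
      (1 * c - (-((10:ℝ) ^ (-z) * c) + (10:ℝ) ^ z * c) / D z) z := by
    rw [heqF]
    exact ((hasDerivAt_id z).mul_const c).sub hlogD
  -- log FD κ (-w)
  have heqFn : (fun w => Real.log (FD κ (-w))) = fun w => -w * c - Real.log (D w) := by
    funext w
    have hflip : FD κ (-w) = (10:ℝ) ^ (-w) / D w := by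
      rw [FD, neg_neg]
      simp only [hDdef]
      ring_nf
    rw [hflip, Real.log_div (ha (-w)).ne' (hDpos w).ne', Real.log_rpow h10]
  have hFn : HasDerivAt (fun w => Real.log (FD κ (-w)))
      (-1 * c - (-((10:ℝ) ^ (-z) * c) + (10:ℝ) ^ z * c) / D z) z := by
    rw [heqFn]
    have : HasDerivAt (fun w : ℝ => -w * c) (-1 * c) z :=
      ((hasDerivAt_id z).neg.mul_const c)
    exact this.sub hlogD
  have hDz := (hDpos z).ne'
  rcases hy with rfl | rfl | rfl
  · -- y = 0
    have : (fun w => Real.log (LD κ w 0)) = fun w => Real.log (FD κ (-w)) := by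
      funext w; simp [LD]
    rw [this]
    convert hFn using 1
    rw [GD]
    field_simp
    ring
  · -- y = 1
    have hFpos : ∀ w, 0 < FD κ w := fun w => div_pos (ha w) (hDpos w)
    have : (fun w => Real.log (LD κ w 1)) =
        fun w => Real.log κ + (Real.log (FD κ w) + Real.log (FD κ (-w))) / 2 := by
      funext w
      have hx : (0:ℝ) < FD κ w * FD κ (-w) := mul_pos (hFpos w) (hFpos (-w))
      rw [show LD κ w 1 = κ * Real.sqrt (FD κ w * FD κ (-w)) by simp [LD]]
      rw [Real.log_mul hκ.ne' (Real.sqrt_pos.mpr hx).ne', Real.log_sqrt hx.le,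
        Real.log_mul (hFpos w).ne' (hFpos (-w)).ne']
    rw [this]
    have hder : HasDerivAt (fun w => Real.log κ + (Real.log (FD κ w) + Real.log (FD κ (-w))) / 2) _ z :=
      (((hF.add hFn).div_const 2).const_add (Real.log κ))
    convert hder using 1
    rw [GD]
    field_simp
    ring
  · -- y = 2
    have : (fun w => Real.log (LD κ w 2)) = fun w => Real.log (FD κ w) := by
      funext w; norm_num [LD]
    rw [this]
    convert hF using 1
    rw [GD]
    field_simp
    ring
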